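/- Let G be a finite group and let τ, ω : G → G be two commuting involutory anti-automorphisms (ωτ = τω). Then for every finite-dimensional complex unitary representation ρ of G (not necessarily irreducible), C_τ(ρ^ω) = C_τ(ρ). -/

import Mathlib

open Module

namespace CST

variable {G : Type*} [Group G]

/-- The `τ`-conjugate representation `ρ^τ` on the dual space, `ρ^τ(g) = ρ(τ(g))^T`. -/
def tauConj {k V : Type*} [CommRing k] [AddCommGroup V] [Module k V]
    (ρ : Representation k G V) (τ : G → G)
    (hmul : ∀ a b : G, τ (a * b) = τ b * τ a) :
    Representation k G (Module.Dual k V) where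
  toFun g := (ρ (τ g)).dualMap
  map_one' := by
    have h0 : τ 1 = τ 1 * τ 1 := by simpa using hmul 1 1
    have h2 : τ 1 * 1 = τ 1 * τ 1 := by rw [mul_one]; exact h0
    have h1 : τ 1 = 1 := (mul_left_cancel h2).symm
    ext φ v
    simp [h1]
  map_mul' g h := by
    ext φ v
    simp [hmul, LinearMap.dualMap_apply, Module.End.mul_apply, map_mul]

/-- The space of intertwining operators between two representations. -/
def repHom {k V W : Type*} [CommRing k] [AddCommGroup V] [Module k V]
    [AddCommGroup W] [Module k W]
    (ρ : Representation k G V) (σ : Representation k G W) :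
    Submodule k (V →ₗ[k] W) where
  carrier := {A | ∀ g : G, A ∘ₗ ρ g = σ g ∘ₗ A}
  zero_mem' := by intro g; ext v; simp
  add_mem' := by
    intro A B hA hB g
    ext v
    have h1 := LinearMap.congr_fun (hA g) v
    have h2 := LinearMap.congr_fun (hB g) v
    simp only [LinearMap.comp_apply, LinearMap.add_apply] at *
    simp [h1, h2]
  smul_mem' := by
    intro c A hA g
    ext v
    have h1 := LinearMap.congr_fun (hA g) v
    simp only [LinearMap.comp_apply, LinearMap.smul_apply] at *
    simp [h1]

/-- Symmetric operators `A : V' → V` (identifying `V` with its bidual):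
`φ(Aψ) = ψ(Aφ)`. -/
def symSub (k V : Type*) [CommRing k] [AddCommGroup V] [Module k V] :
    Submodule k (Module.Dual k V →ₗ[k] V) where
  carrier := {A | ∀ φ ψ : Module.Dual k V, φ (A ψ) = ψ (A φ)}
  zero_mem' := by intro φ ψ; simp
  add_mem' := by
    intro A B hA hB φ ψ
    simp [hA φ ψ, hB φ ψ]
  smul_mem' := by
    intro c A hA φ ψ
    simp [hA φ ψ]

/-- Antisymmetric operators `A : V' → V`: `φ(Aψ) = -ψ(Aφ)`. -/
def skewSub (k V : Type*) [CommRing k] [AddCommGroup V] [Module k V] :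
    Submodule k (Module.Dual k V →ₗ[k] V) where
  carrier := {A | ∀ φ ψ : Module.Dual k V, φ (A ψ) = -ψ (A φ)}
  zero_mem' := by intro φ ψ; simp
  add_mem' := by
    intro A B hA hB φ ψ
    simp [hA φ ψ, hB φ ψ]; ring
  smul_mem' := by
    intro c A hA φ ψ
    simp [hA φ ψ]

/-- The `τ`-Frobenius–Schur number
`C_τ(ρ) = dim Hom_G^Sym(ρ^τ, ρ) - dim Hom_G^Skew(ρ^τ, ρ)`. -/
noncomputable def FSnum {V : Type*} [AddCommGroup V] [Module ℂ V]
    (ρ : Representation ℂ G V) (τ : G → G)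
    (hmul : ∀ a b : G, τ (a * b) = τ b * τ a) : ℤ :=
  (Module.finrank ℂ ↥(repHom (tauConj ρ τ hmul) ρ ⊓ symSub ℂ V) : ℤ)
    - (Module.finrank ℂ ↥(repHom (tauConj ρ τ hmul) ρ ⊓ skewSub ℂ V) : ℤ)

/-- Equivalence of representations. -/
def RepEquiv {k V W : Type*} [CommRing k] [AddCommGroup V] [Module k V]
    [AddCommGroup W] [Module k W]
    (ρ : Representation k G V) (σ : Representation k G W) : Prop :=
  ∃ e : V ≃ₗ[k] W, ∀ (g : G) (v : V), e (ρ g v) = σ g (e v)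

/-- Irreducibility of a representation. -/
def IsIrreducible {k V : Type*} [CommRing k] [AddCommGroup V] [Module k V]
    (ρ : Representation k G V) : Prop :=
  Nontrivial V ∧
    ∀ U : Submodule k V, (∀ (g : G), ∀ v ∈ U, ρ g v ∈ U) → U = ⊥ ∨ U = ⊤

/-- The subrepresentation on an invariant submodule. -/
def subRep {k V : Type*} [CommRing k] [AddCommGroup V] [Module k V]
    (ρ : Representation k G V) (U : Submodule k V)
    (hU : ∀ (g : G), ∀ v ∈ U, ρ g v ∈ U) : Representation k G U where
  toFun g := (ρ g).restrict (hU g)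
  map_one' := by
    ext v
    simp [LinearMap.restrict_apply]
  map_mul' g h := by
    ext v
    simp [LinearMap.restrict_apply]

/-- A representation is multiplicity-free: in any decomposition into irreducible
subrepresentations, the summands are pairwise non-equivalent. -/
def MultFree {k V : Type*} [CommRing k] [AddCommGroup V] [Module k V]
    (ρ : Representation k G V) : Prop :=
  ∀ (m : ℕ) (U : Fin m → Submodule k V)
    (hU : ∀ i, ∀ (g : G), ∀ v ∈ U i, ρ g v ∈ U i),
    DirectSum.IsInternal U →
    (∀ i, IsIrreducible (subRep ρ (U i) (hU i))) →
    ∀ i j, i ≠ j → ¬ RepEquiv (subRep ρ (U i) (hU i)) (subRep ρ (U j) (hU j))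

/-- A representation of `G` is real if it admits a basis in which all matrix
coefficients are real valued. -/
def IsRealRep {V : Type*} [AddCommGroup V] [Module ℂ V]
    (ρ : Representation ℂ G V) : Prop :=
  ∃ (n : ℕ) (b : Basis (Fin n) ℂ V),
    ∀ (g : G) (i j : Fin n), ((LinearMap.toMatrix b b (ρ g)) i j).im = 0

/-- Direct sum of two representations. -/
def prodRep {k V W : Type*} [CommRing k] [AddCommGroup V] [Module k V]
    [AddCommGroup W] [Module k W]
    (σ : Representation k G V) (ρ : Representation k G W) :
    Representation k G (V × W) where
  toFun g := (σ g).prodMap (ρ g)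
  map_one' := by
    apply LinearMap.ext
    intro x
    simp
  map_mul' g h := by
    apply LinearMap.ext
    intro x
    simp [Module.End.mul_apply]

/-- Induced representation carrier:
`Ind_K^G V = {F : G → V | F(gk) = σ(k⁻¹) F(g)}`. -/
def indCarrier {k V : Type*} [CommRing k] [AddCommGroup V] [Module k V]
    (K : Subgroup G) (σ : Representation k K V) : Submodule k (G → V) where
  carrier := {F | ∀ (g : G) (x : K), F (g * x) = σ x⁻¹ (F g)}
  zero_mem' := by intro g x; simp
  add_mem' := by intro F₁ F₂ h₁ h₂ g x; simp [h₁ g x, h₂ g x]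
  smul_mem' := by intro c F h g x; simp [h g x]

/-- The induced representation `Ind_K^G σ`, acting by `(g₀ · F)(g) = F(g₀⁻¹ g)`. -/
def indRep {k V : Type*} [CommRing k] [AddCommGroup V] [Module k V]
    (K : Subgroup G) (σ : Representation k K V) :
    Representation k G (indCarrier K σ) where
  toFun g₀ :=
    { toFun := fun F => ⟨fun g => F.1 (g₀⁻¹ * g), by
        intro g x
        have h := F.2 (g₀⁻¹ * g) x
        simpa [mul_assoc] using h⟩
      map_add' := fun F₁ F₂ => rfl
      map_smul' := fun c F => rfl }
  map_one' := by
    apply LinearMap.ext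
    intro F
    apply Subtype.ext
    funext g
    simp
  map_mul' g h := by
    apply LinearMap.ext
    intro F
    apply Subtype.ext
    funext x
    simp [mul_assoc, mul_inv_rev]

/-- The permutation representation of `G` on `L(X)`. -/
def permRep (G X : Type*) [Group G] [MulAction G X] :
    Representation ℂ G (X → ℂ) where
  toFun g :=
    { toFun := fun f x => f (g⁻¹ • x)
      map_add' := fun f₁ f₂ => rfl
      map_smul' := fun c f => rfl }
  map_one' := by
    ext f x
    simp
  map_mul' g h := by
    ext f x
    simp [mul_smul]

/-- The twisted action `(π^τ × π)(g)(x₁,x₂) = (π(τ(g⁻¹)) x₁, π(g) x₂)` on `X × X`. -/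
def twistAct {X : Type*} [MulAction G X] (τ : G → G) (g : G) (p : X × X) :
    X × X := (τ g⁻¹ • p.1, g • p.2)

/-- Orbits of the twisted action on `X × X`. -/
def IsTwistOrbit {X : Type*} [MulAction G X] (τ : G → G)
    (O : Set (X × X)) : Prop :=
  ∃ p : X × X, O = {q | ∃ g : G, q = twistAct τ g p}

/-- Orbits of the diagonal action of `G` on `X × X`. -/
def IsDiagOrbit (G : Type*) {X : Type*} [Group G] [MulAction G X]
    (O : Set (X × X)) : Prop :=
  ∃ p : X × X, O = {q | ∃ g : G, q = (g • p.1, g • p.2)}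

/-- `G` is `τ`-simply reducible: the tensor product of any two irreducible
representations is multiplicity-free, and every irreducible representation is
equivalent to its `τ`-conjugate. -/
def TauSimplyReducible (G : Type*) [Group G] (τ : G → G)
    (hmul : ∀ a b : G, τ (a * b) = τ b * τ a) : Prop :=
  (∀ (V W : Type) [AddCommGroup V] [Module ℂ V] [FiniteDimensional ℂ V]
      [AddCommGroup W] [Module ℂ W] [FiniteDimensional ℂ W]
      (ρ₁ : Representation ℂ G V) (ρ₂ : Representation ℂ G W),
      IsIrreducible ρ₁ → IsIrreducible ρ₂ → MultFree (ρ₁.tprod ρ₂)) ∧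
  (∀ (V : Type) [AddCommGroup V] [Module ℂ V] [FiniteDimensional ℂ V]
      (ρ : Representation ℂ G V), IsIrreducible ρ → RepEquiv (tauConj ρ τ hmul) ρ)

/-- The double coset of `s` with respect to the diagonal subgroup of `G × G × G`. -/
def diagCoset3 (G : Type*) [Group G] (s : G × G × G) : Set (G × G × G) :=
  {x | ∃ a b : G, x = (a, a, a) * s * (b, b, b)}

/-- The character of a representation. -/
noncomputable def repChar {V : Type*} [AddCommGroup V] [Module ℂ V]
    (σ : Representation ℂ G V) (g : G) : ℂ :=
  LinearMap.trace ℂ V (σ g)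

end CST

section FSaux

open Module LinearMap CST
open scoped Matrix

variable {G : Type*} [Group G]

section Flip

variable {V : Type*} [AddCommGroup V] [Module ℂ V] [FiniteDimensional ℂ V]

lemma dual_ext' {v w : V} (h : ∀ φ : Dual ℂ V, φ v = φ w) : v = w := by
  rw [← sub_eq_zero, ← forall_dual_apply_eq_zero_iff ℂ (v - w)]
  intro φ
  simp [h φ]

variable (V) in
/-- The flip `X ↦ ι⁻¹ ∘ Xᵀ` on `Hom(V', V)`. -/
noncomputable def flipJ :
    (Dual ℂ V →ₗ[ℂ] V) →ₗ[ℂ] (Dual ℂ V →ₗ[ℂ] V) where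
  toFun X := (evalEquiv ℂ V).symm.toLinearMap ∘ₗ X.dualMap
  map_add' X Y := by
    have : (X + Y).dualMap = X.dualMap + Y.dualMap := by ext φ v; simp
    ext φ
    simp [this]
  map_smul' c X := by
    have : (c • X).dualMap = c • X.dualMap := by ext φ v; simp
    ext φ
    simp [this]

lemma flipJ_apply (X : Dual ℂ V →ₗ[ℂ] V) (φ ψ : Dual ℂ V) :
    ψ (flipJ V X φ) = φ (X ψ) := by
  simp [flipJ]

lemma mem_symSub_iff (X : Dual ℂ V →ₗ[ℂ] V) :
    X ∈ symSub ℂ V ↔ flipJ V X = X := by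
  constructor
  · intro h
    ext φ
    refine dual_ext' fun ψ => ?_
    rw [flipJ_apply]
    exact (h ψ φ).symm
  · intro h φ ψ
    conv_lhs => rw [← h]
    rw [flipJ_apply]

lemma mem_skewSub_iff (X : Dual ℂ V →ₗ[ℂ] V) :
    X ∈ skewSub ℂ V ↔ flipJ V X = -X := by
  constructor
  · intro h
    ext φ
    refine dual_ext' fun ψ => ?_
    rw [flipJ_apply]
    simp [h φ ψ]
  · intro h φ ψ
    have := congrArg (fun Y => φ (Y ψ)) h
    rw [flipJ_apply] at this
    simp only [LinearMap.neg_apply, map_neg] at this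
    rw [this, neg_neg]

end Flip

section Conj

lemma anti_one {τ : G → G} (hm : ∀ a b : G, τ (a * b) = τ b * τ a) : τ 1 = 1 := by
  have h0 : τ 1 = τ 1 * τ 1 := by simpa using hm 1 1
  have h2 : τ 1 * 1 = τ 1 * τ 1 := by rw [mul_one]; exact h0
  exact (mul_left_cancel h2).symm

lemma anti_inv {τ : G → G} (hm : ∀ a b : G, τ (a * b) = τ b * τ a) (g : G) :
    τ g⁻¹ = (τ g)⁻¹ := by
  have : τ g⁻¹ * τ g = 1 := by
    rw [← hm]; simp [anti_one hm]
  exact eq_inv_of_mul_eq_one_left this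

variable {V : Type*} [AddCommGroup V] [Module ℂ V] [FiniteDimensional ℂ V]
variable (ρ : Representation ℂ G V) (τ : G → G)
variable (hm : ∀ a b : G, τ (a * b) = τ b * τ a)

lemma tauConj_apply (g : G) : tauConj ρ τ hm g = (ρ (τ g)).dualMap := rfl

/-- The conjugation operator `X ↦ ρ(g) ∘ X ∘ ρ^τ(g⁻¹)` on `Hom(V', V)`. -/
noncomputable def conjL (g : G) :
    (Dual ℂ V →ₗ[ℂ] V) →ₗ[ℂ] (Dual ℂ V →ₗ[ℂ] V) where
  toFun X := ρ g ∘ₗ X ∘ₗ tauConj ρ τ hm g⁻¹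
  map_add' X Y := by ext φ; simp
  map_smul' c X := by ext φ; simp

lemma conjL_apply (g : G) (X : Dual ℂ V →ₗ[ℂ] V) (φ : Dual ℂ V) :
    conjL ρ τ hm g X φ = ρ g (X (tauConj ρ τ hm g⁻¹ φ)) := rfl

lemma conjL_conjL (g h : G) (X : Dual ℂ V →ₗ[ℂ] V) :
    conjL ρ τ hm g (conjL ρ τ hm h X) = conjL ρ τ hm (g * h) X := by
  ext φ
  simp [conjL_apply, mul_inv_rev, map_mul, Module.End.mul_apply]

lemma rho_rho_inv (g : G) (v : V) : ρ g (ρ g⁻¹ v) = v := by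
  rw [← Module.End.mul_apply, ← map_mul]; simp

lemma mem_repHom_iff (X : Dual ℂ V →ₗ[ℂ] V) :
    X ∈ repHom (tauConj ρ τ hm) ρ ↔ ∀ g : G, conjL ρ τ hm g X = X := by
  constructor
  · intro h g
    ext φ
    have h1 := LinearMap.congr_fun (h g) (tauConj ρ τ hm g⁻¹ φ)
    simp only [LinearMap.comp_apply] at h1
    rw [conjL_apply, ← h1, ← Module.End.mul_apply, ← map_mul]
    simp
  · intro h g
    ext φ
    simp only [LinearMap.comp_apply]
    have h1 : ρ g⁻¹ (X (tauConj ρ τ hm g φ)) = X φ := by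
      have h0 := LinearMap.congr_fun (h g⁻¹) φ
      rw [conjL_apply, inv_inv] at h0
      exact h0
    have h2 := congrArg (ρ g) h1
    rw [rho_rho_inv] at h2
    exact h2

lemma flipJ_conjL (hτ2 : ∀ g : G, τ (τ g) = g) (g : G) (X : Dual ℂ V →ₗ[ℂ] V) :
    flipJ V (conjL ρ τ hm g X) = conjL ρ τ hm (τ g)⁻¹ (flipJ V X) := by
  ext φ
  refine dual_ext' fun ψ => ?_
  rw [flipJ_apply, conjL_apply, conjL_apply]
  have hstep : ψ (ρ (τ g)⁻¹ (flipJ V X (tauConj ρ τ hm ((τ g)⁻¹)⁻¹ φ)))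
      = ((ρ (τ g)⁻¹).dualMap ψ) (flipJ V X (tauConj ρ τ hm (τ g) φ)) := by
    rw [inv_inv]; rfl
  rw [hstep, flipJ_apply]
  have h1 : tauConj ρ τ hm (τ g) φ = (ρ g).dualMap φ := by
    rw [tauConj_apply, hτ2]
  have h2 : (ρ (τ g)⁻¹).dualMap ψ = tauConj ρ τ hm g⁻¹ ψ := by
    rw [tauConj_apply, anti_inv hm]
  rw [h1, h2]
  rfl

end Conj


section Avg

variable [Fintype G]
variable {V : Type*} [AddCommGroup V] [Module ℂ V] [FiniteDimensional ℂ V]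
variable (ρ : Representation ℂ G V) (τ : G → G)
variable (hm : ∀ a b : G, τ (a * b) = τ b * τ a)

/-- The averaging projection onto the space of intertwiners. -/
noncomputable def avgP : (Dual ℂ V →ₗ[ℂ] V) →ₗ[ℂ] (Dual ℂ V →ₗ[ℂ] V) :=
  (Fintype.card G : ℂ)⁻¹ • ∑ g : G, conjL ρ τ hm g

lemma avgP_apply (X : Dual ℂ V →ₗ[ℂ] V) :
    avgP ρ τ hm X = (Fintype.card G : ℂ)⁻¹ • ∑ g : G, conjL ρ τ hm g X := by
  simp [avgP, LinearMap.sum_apply]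

lemma conjL_avgP (h : G) (X : Dual ℂ V →ₗ[ℂ] V) :
    conjL ρ τ hm h (avgP ρ τ hm X) = avgP ρ τ hm X := by
  rw [avgP_apply, map_smul, map_sum]
  simp_rw [conjL_conjL]
  congr 1
  exact Fintype.sum_equiv (Equiv.mulLeft h)
    (fun g => conjL ρ τ hm (h * g) X) (fun g => conjL ρ τ hm g X)
    (fun g => rfl)

lemma avgP_mem (X : Dual ℂ V →ₗ[ℂ] V) :
    avgP ρ τ hm X ∈ repHom (tauConj ρ τ hm) ρ :=
  (mem_repHom_iff ρ τ hm _).mpr fun h => conjL_avgP ρ τ hm h X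

lemma avgP_id {X : Dual ℂ V →ₗ[ℂ] V} (hX : X ∈ repHom (tauConj ρ τ hm) ρ) :
    avgP ρ τ hm X = X := by
  rw [avgP_apply]
  have hfix := (mem_repHom_iff ρ τ hm X).mp hX
  simp_rw [hfix]
  rw [Finset.sum_const, Finset.card_univ, ← Nat.cast_smul_eq_nsmul ℂ, smul_smul,
    inv_mul_cancel₀ (Nat.cast_ne_zero.mpr Fintype.card_ne_zero), one_smul]

lemma flipJ_avgP (hτ2 : ∀ g : G, τ (τ g) = g) (X : Dual ℂ V →ₗ[ℂ] V) :
    flipJ V (avgP ρ τ hm X) = avgP ρ τ hm (flipJ V X) := by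
  rw [avgP_apply, map_smul, map_sum]
  simp_rw [flipJ_conjL ρ τ hm hτ2]
  rw [avgP_apply ρ τ hm (flipJ V X)]
  congr 1
  have hinv : Function.Involutive (fun g : G => (τ g)⁻¹) := by
    intro g
    simp only
    rw [anti_inv hm, inv_inv, hτ2]
  exact Fintype.sum_equiv hinv.toPerm
    (fun g => conjL ρ τ hm (τ g)⁻¹ (flipJ V X)) (fun g => conjL ρ τ hm g (flipJ V X))
    (fun g => rfl)

/-- Projection onto the symmetric intertwiners. -/
noncomputable def projPlus : (Dual ℂ V →ₗ[ℂ] V) →ₗ[ℂ] (Dual ℂ V →ₗ[ℂ] V) :=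
  (2 : ℂ)⁻¹ • (avgP ρ τ hm + flipJ V ∘ₗ avgP ρ τ hm)

/-- Projection onto the antisymmetric intertwiners. -/
noncomputable def projMinus : (Dual ℂ V →ₗ[ℂ] V) →ₗ[ℂ] (Dual ℂ V →ₗ[ℂ] V) :=
  (2 : ℂ)⁻¹ • (avgP ρ τ hm - flipJ V ∘ₗ avgP ρ τ hm)

lemma flipJ_flipJ (X : Dual ℂ V →ₗ[ℂ] V) : flipJ V (flipJ V X) = X := by
  ext φ
  refine dual_ext' fun ψ => ?_
  rw [flipJ_apply, flipJ_apply]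

lemma isProj_plus (hτ2 : ∀ g : G, τ (τ g) = g) :
    LinearMap.IsProj (repHom (tauConj ρ τ hm) ρ ⊓ symSub ℂ V) (projPlus ρ τ hm) := by
  constructor
  · intro X
    have h1 : projPlus ρ τ hm X
        = (2 : ℂ)⁻¹ • (avgP ρ τ hm X + flipJ V (avgP ρ τ hm X)) := rfl
    rw [h1]
    refine Submodule.smul_mem _ _ (Submodule.mem_inf.mpr ⟨?_, ?_⟩)
    · refine Submodule.add_mem _ (avgP_mem ρ τ hm X) ?_
      rw [flipJ_avgP ρ τ hm hτ2]
      exact avgP_mem ρ τ hm _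
    · rw [mem_symSub_iff, map_add, flipJ_flipJ, add_comm]
  · intro X hX
    have h1 : projPlus ρ τ hm X
        = (2 : ℂ)⁻¹ • (avgP ρ τ hm X + flipJ V (avgP ρ τ hm X)) := rfl
    obtain ⟨hH, hS⟩ := Submodule.mem_inf.mp hX
    rw [h1, avgP_id ρ τ hm hH, (mem_symSub_iff X).mp hS, ← two_smul ℂ X, smul_smul]
    norm_num

lemma isProj_minus (hτ2 : ∀ g : G, τ (τ g) = g) :
    LinearMap.IsProj (repHom (tauConj ρ τ hm) ρ ⊓ skewSub ℂ V) (projMinus ρ τ hm) := by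
  constructor
  · intro X
    have h1 : projMinus ρ τ hm X
        = (2 : ℂ)⁻¹ • (avgP ρ τ hm X - flipJ V (avgP ρ τ hm X)) := rfl
    rw [h1]
    refine Submodule.smul_mem _ _ (Submodule.mem_inf.mpr ⟨?_, ?_⟩)
    · refine Submodule.sub_mem _ (avgP_mem ρ τ hm X) ?_
      rw [flipJ_avgP ρ τ hm hτ2]
      exact avgP_mem ρ τ hm _
    · rw [mem_skewSub_iff, map_sub, flipJ_flipJ]
      abel
  · intro X hX
    have h1 : projMinus ρ τ hm X
        = (2 : ℂ)⁻¹ • (avgP ρ τ hm X - flipJ V (avgP ρ τ hm X)) := rfl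
    obtain ⟨hH, hS⟩ := Submodule.mem_inf.mp hX
    rw [h1, avgP_id ρ τ hm hH, (mem_skewSub_iff X).mp hS, sub_neg_eq_add,
      ← two_smul ℂ X, smul_smul]
    norm_num

lemma FSnum_eq_trace (hτ2 : ∀ g : G, τ (τ g) = g) :
    ((FSnum ρ τ hm : ℤ) : ℂ)
      = LinearMap.trace ℂ _ (flipJ V ∘ₗ avgP ρ τ hm) := by
  have hp := (isProj_plus ρ τ hm hτ2).trace
  have hq := (isProj_minus ρ τ hm hτ2).trace
  have hdiff : flipJ V ∘ₗ avgP ρ τ hm = projPlus ρ τ hm - projMinus ρ τ hm := by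
    rw [projPlus, projMinus]
    module
  rw [hdiff, map_sub, hp, hq, FSnum]
  push_cast
  ring

end Avg

section TraceCalc

variable {V : Type*} [AddCommGroup V] [Module ℂ V] [FiniteDimensional ℂ V]

variable (V) in
/-- The operator `X ↦ A ∘ J(X) ∘ Cᵀ` on `Hom(V', V)`. -/
noncomputable def flipConjOp (A C : V →ₗ[ℂ] V) :
    (Dual ℂ V →ₗ[ℂ] V) →ₗ[ℂ] (Dual ℂ V →ₗ[ℂ] V) where
  toFun X := A ∘ₗ flipJ V X ∘ₗ C.dualMap
  map_add' X Y := by ext φ; simp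
  map_smul' c X := by ext φ; simp

lemma matrix_stdBasis_repr {n : ℕ} (N : Matrix (Fin n) (Fin n) ℂ) (ij : Fin n × Fin n) :
    (Matrix.stdBasis ℂ (Fin n) (Fin n)).repr N ij = N ij.1 ij.2 := by
  simp [Matrix.stdBasis]

lemma toMatrix_flipJ {n : ℕ} (b : Basis (Fin n) ℂ V) (X : Dual ℂ V →ₗ[ℂ] V) :
    LinearMap.toMatrix b.dualBasis b (flipJ V X)
      = (LinearMap.toMatrix b.dualBasis b X)ᵀ := by
  ext i j
  rw [LinearMap.toMatrix_apply, Matrix.transpose_apply, LinearMap.toMatrix_apply]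
  rw [← Basis.dualBasis_apply, flipJ_apply, Basis.dualBasis_apply]

lemma toMatrix_dualMap' {n : ℕ} (b : Basis (Fin n) ℂ V) (C : V →ₗ[ℂ] V) :
    LinearMap.toMatrix b.dualBasis b.dualBasis C.dualMap
      = (LinearMap.toMatrix b b C)ᵀ := by
  ext i j
  rw [LinearMap.toMatrix_apply, Matrix.transpose_apply, LinearMap.toMatrix_apply]
  rw [Basis.dualBasis_repr, LinearMap.dualMap_apply, Basis.dualBasis_apply]

lemma stdBasisMatrix_transpose' {n : ℕ} (i j : Fin n) :
    (Matrix.single i j (1 : ℂ))ᵀ = Matrix.single j i 1 := by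
  ext a c
  simp [Matrix.single, and_comm]

/-- The operator `M ↦ Am * Mᵀ * Cmᵀ` on matrices. -/
noncomputable def matOp {n : ℕ} (Am Cm : Matrix (Fin n) (Fin n) ℂ) :
    Matrix (Fin n) (Fin n) ℂ →ₗ[ℂ] Matrix (Fin n) (Fin n) ℂ where
  toFun M := Am * Mᵀ * Cmᵀ
  map_add' M N := by
    simp [Matrix.transpose_add, Matrix.mul_add, Matrix.add_mul]
  map_smul' c M := by
    simp [Matrix.transpose_smul, Matrix.mul_smul, Matrix.smul_mul]

lemma trace_matOp {n : ℕ} (Am Cm : Matrix (Fin n) (Fin n) ℂ) :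
    LinearMap.trace ℂ _ (matOp Am Cm) = Matrix.trace (Am * Cm) := by
  classical
  rw [LinearMap.trace_eq_matrix_trace ℂ (Matrix.stdBasis ℂ (Fin n) (Fin n))]
  rw [Matrix.trace, Matrix.trace]
  rw [Fintype.sum_prod_type]
  refine Finset.sum_congr rfl fun i _ => ?_
  rw [Matrix.diag_apply, Matrix.mul_apply]
  refine Finset.sum_congr rfl fun j _ => ?_
  rw [Matrix.diag_apply, LinearMap.toMatrix_apply, matrix_stdBasis_repr]
  have hsb : Matrix.stdBasis ℂ (Fin n) (Fin n) (i, j)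
      = Matrix.single i j (1 : ℂ) := Matrix.stdBasis_eq_single ℂ i j
  rw [hsb]
  show (Am * (Matrix.single i j (1:ℂ))ᵀ * Cmᵀ) i j = Am i j * Cm j i
  rw [stdBasisMatrix_transpose', Matrix.mul_assoc, Matrix.mul_apply]
  rw [Finset.sum_eq_single j]
  · rw [Matrix.single_mul_apply_same, Matrix.transpose_apply, one_mul]
  · intro k _ hk
    rw [Matrix.single_mul_apply_of_ne _ _ _ _ _ hk, mul_zero]
  · intro h
    exact absurd (Finset.mem_univ j) h

lemma trace_flipConjOp (A C : V →ₗ[ℂ] V) :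
    LinearMap.trace ℂ _ (flipConjOp V A C) = LinearMap.trace ℂ V (A ∘ₗ C) := by
  classical
  set n := finrank ℂ V with hn
  set b : Basis (Fin n) ℂ V := finBasis ℂ V with hb
  set e : (Dual ℂ V →ₗ[ℂ] V) ≃ₗ[ℂ] Matrix (Fin n) (Fin n) ℂ :=
    LinearMap.toMatrix b.dualBasis b with he
  set Am := LinearMap.toMatrix b b A with hAm
  set Cm := LinearMap.toMatrix b b C with hCm
  rw [← LinearMap.trace_conj' (flipConjOp V A C) e]
  have key : ∀ M : Matrix (Fin n) (Fin n) ℂ,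
      e.conj (flipConjOp V A C) M = Am * Mᵀ * Cmᵀ := by
    intro M
    rw [LinearEquiv.conj_apply_apply]
    have hM : e.symm M = e.symm M := rfl
    set X := e.symm M with hX
    have hMe : M = e X := by rw [hX, LinearEquiv.apply_symm_apply]
    rw [hMe]
    have h0 : flipConjOp V A C X = A ∘ₗ (flipJ V X ∘ₗ C.dualMap) := rfl
    rw [h0]
    show LinearMap.toMatrix b.dualBasis b (A ∘ₗ (flipJ V X ∘ₗ C.dualMap)) = _
    rw [LinearMap.toMatrix_comp b.dualBasis b b A (flipJ V X ∘ₗ C.dualMap),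
      LinearMap.toMatrix_comp b.dualBasis b.dualBasis b (flipJ V X) C.dualMap,
      toMatrix_flipJ, toMatrix_dualMap']
    rw [Matrix.mul_assoc]
  -- now compute the trace of `M ↦ Am * Mᵀ * Cmᵀ`
  have hconj : e.conj (flipConjOp V A C) = matOp Am Cm := by
    ext M : 1
    rw [key M]
    rfl
  rw [hconj, trace_matOp]
  rw [LinearMap.trace_eq_matrix_trace ℂ b, LinearMap.toMatrix_comp b b b A C]

end TraceCalc

section Final

variable [Fintype G]
variable {V : Type*} [AddCommGroup V] [Module ℂ V] [FiniteDimensional ℂ V]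
variable (ρ : Representation ℂ G V) (τ : G → G)
variable (hm : ∀ a b : G, τ (a * b) = τ b * τ a)

lemma flipJ_comp_conjL (hτ2 : ∀ g : G, τ (τ g) = g) (g : G) :
    flipJ V ∘ₗ conjL ρ τ hm g = flipConjOp V (ρ (τ g)⁻¹) (ρ g) := by
  apply LinearMap.ext
  intro X
  rw [LinearMap.comp_apply, flipJ_conjL ρ τ hm hτ2]
  have h1 : tauConj ρ τ hm ((τ g)⁻¹)⁻¹ = (ρ g).dualMap := by
    rw [inv_inv, tauConj_apply, hτ2]
  show ρ (τ g)⁻¹ ∘ₗ flipJ V X ∘ₗ tauConj ρ τ hm ((τ g)⁻¹)⁻¹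
      = ρ (τ g)⁻¹ ∘ₗ flipJ V X ∘ₗ (ρ g).dualMap
  rw [h1]

lemma FSnum_formula (hτ2 : ∀ g : G, τ (τ g) = g) :
    ((FSnum ρ τ hm : ℤ) : ℂ)
      = (Fintype.card G : ℂ)⁻¹ * ∑ g : G, repChar ρ ((τ g)⁻¹ * g) := by
  rw [FSnum_eq_trace ρ τ hm hτ2]
  have hsplit : flipJ V ∘ₗ avgP ρ τ hm
      = (Fintype.card G : ℂ)⁻¹ • ∑ g : G, (flipJ V ∘ₗ conjL ρ τ hm g) := by
    apply LinearMap.ext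
    intro X
    simp [avgP, LinearMap.sum_apply, map_sum]
  rw [hsplit, map_smul, map_sum]
  simp_rw [flipJ_comp_conjL ρ τ hm hτ2, trace_flipConjOp]
  have hterm : ∀ g : G,
      LinearMap.trace ℂ V (ρ (τ g)⁻¹ ∘ₗ ρ g) = repChar ρ ((τ g)⁻¹ * g) := by
    intro g
    rw [repChar, map_mul]
    rfl
  simp_rw [hterm]
  rw [smul_eq_mul]

lemma repChar_tauConj (ω : G → G) (hω : ∀ a b : G, ω (a * b) = ω b * ω a) (x : G) :
    repChar (tauConj ρ ω hω) x = repChar ρ (ω x) := by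
  rw [repChar, repChar, tauConj_apply, LinearMap.dualMap_def, LinearMap.trace_transpose']

end Final

end FSaux


/-- If `τ` and `ω` are commuting involutory anti-automorphisms of a
finite group `G`, then `C_τ(ρ^ω) = C_τ(ρ)` for every finite-dimensional complex
representation `ρ`. -/
theorem FS_number_omega_conj
    {G : Type*} [Group G] [Fintype G]
    {V : Type*} [AddCommGroup V] [Module ℂ V] [FiniteDimensional ℂ V]
    (τ ω : G → G)
    (hτmul : ∀ a b : G, τ (a * b) = τ b * τ a) (hτinv : ∀ g : G, τ (τ g) = g)
    (hωmul : ∀ a b : G, ω (a * b) = ω b * ω a) (hωinv : ∀ g : G, ω (ω g) = g)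
    (hcomm : ∀ g : G, ω (τ g) = τ (ω g))
    (ρ : Representation ℂ G V) :
    CST.FSnum (CST.tauConj ρ ω hωmul) τ hτmul = CST.FSnum ρ τ hτmul := by
  have h1 := FSnum_formula (CST.tauConj ρ ω hωmul) τ hτmul hτinv
  have h2 := FSnum_formula ρ τ hτmul hτinv
  have hchar : ∀ x : G, CST.repChar (CST.tauConj ρ ω hωmul) x = CST.repChar ρ (ω x) :=
    repChar_tauConj ρ ω hωmul
  have hsum : ∑ g : G, CST.repChar ρ (ω ((τ g)⁻¹ * g))
      = ∑ g : G, CST.repChar ρ ((τ g)⁻¹ * g) := by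
    have hrw : ∀ g : G, ω ((τ g)⁻¹ * g) = ω g * (τ (ω g))⁻¹ := by
      intro g
      rw [hωmul, anti_inv hωmul, hcomm]
    have hcyc : ∀ a b : G, CST.repChar ρ (a * b) = CST.repChar ρ (b * a) := by
      intro a b
      rw [CST.repChar, CST.repChar, show ρ (a * b) = ρ a * ρ b from map_mul ρ a b,
        show ρ (b * a) = ρ b * ρ a from map_mul ρ b a]
      exact LinearMap.trace_mul_comm ℂ (ρ a) (ρ b)
    simp_rw [hrw]
    have hsub : ∑ g : G, CST.repChar ρ (ω g * (τ (ω g))⁻¹)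
        = ∑ g : G, CST.repChar ρ (g * (τ g)⁻¹) :=
      Fintype.sum_equiv ((Function.Involutive.toPerm ω hωinv))
        (fun g => CST.repChar ρ (ω g * (τ (ω g))⁻¹))
        (fun g => CST.repChar ρ (g * (τ g)⁻¹))
        (fun g => rfl)
    rw [hsub]
    exact Finset.sum_congr rfl fun g _ => hcyc g (τ g)⁻¹
  have : ((CST.FSnum (CST.tauConj ρ ω hωmul) τ hτmul : ℤ) : ℂ)
      = ((CST.FSnum ρ τ hτmul : ℤ) : ℂ) := by
    rw [h1, h2]
    congr 1
    simp_rw [hchar]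
    exact hsum
  exact_mod_cast this
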